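/- Let m > 1/2, λ > 0, let n ≥ 2 and r be integers with 1 ≤ r ≤ n/2, set c̄_m = Σ_{k=1}^∞ k^{−2m} and c'_m = max{2, (2(1 + 2^{1−2m} c̄_m) + 2^{2m}(1 + 2^{1−2m} c̄_m)²) π^{−2m}}. Define λ_{c,r} = Σ_{k=1}^∞ (2π(kn−r))^{−2m} + Σ_{k=0}^∞ (2π(kn+r))^{−2m} and λ_{d,r} = Σ_{k=1}^∞ (2π(kn−r))^{−4m} + Σ_{k=0}^∞ (2π(kn+r))^{−4m}. Then 1 − λ_{d,r}/(λ + λ_{c,r})² ≤ c'_m (λ + n^{−2m}) (2πr)^{2m}. -/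

import Mathlib

/-! Write `a = (2πr)^{-2m}` and `s = λ + λ_{c,r}`. The `k = 0` term of the second series gives
`a ≤ λ_{c,r}` and `a² ≤ λ_{d,r}`, hence `1 - λ_{d,r}/s² ≤ (s - a)(s + a)/s² ≤ 2(s - a)/a`.
Every other term has base at least `πn(k+1)` (for the first series because `2r ≤ n`), so comparison
with `c̄_m` gives `s - a ≤ λ + 2 c̄_m (πn)^{-2m}`, and `c'_m` dominates both `2` and `4 c̄_m π^{-2m}`. -/

open Real

noncomputable section

/-- `λ_{c,r} = ∑_{k=1}^∞ (2π(kn-r))^{-2m} + ∑_{k=0}^∞ (2π(kn+r))^{-2m}`. -/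
def lamC (m : ℝ) (n : ℕ) (r : ℕ) : ℝ :=
  (∑' k : ℕ, (2 * π * (((k : ℝ) + 1) * n - r)) ^ (-(2 * m)))
    + ∑' k : ℕ, (2 * π * ((k : ℝ) * n + r)) ^ (-(2 * m))

/-- `λ_{d,r} = ∑_{k=1}^∞ (2π(kn-r))^{-4m} + ∑_{k=0}^∞ (2π(kn+r))^{-4m}`. -/
def lamD (m : ℝ) (n : ℕ) (r : ℕ) : ℝ :=
  (∑' k : ℕ, (2 * π * (((k : ℝ) + 1) * n - r)) ^ (-(4 * m)))
    + ∑' k : ℕ, (2 * π * ((k : ℝ) * n + r)) ^ (-(4 * m))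

/-- `c̄_m = ∑_{k=1}^∞ k^{-2m}`. -/
def cbar (m : ℝ) : ℝ := ∑' k : ℕ, ((k : ℝ) + 1) ^ (-(2 * m))

/-- `c'_m = max{2, (2(1 + 2^{1-2m} c̄_m) + 2^{2m}(1 + 2^{1-2m} c̄_m)²) π^{-2m}}`. -/
def cprime (m : ℝ) : ℝ :=
  max 2 ((2 * (1 + (2 : ℝ) ^ (1 - 2 * m) * cbar m) +
    (2 : ℝ) ^ (2 * m) * (1 + (2 : ℝ) ^ (1 - 2 * m) * cbar m) ^ 2) * π ^ (-(2 * m)))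

lemma summable_nat_add_one_rpow_neg {p : ℝ} (hp : 1 < p) :
    Summable (fun k : ℕ => ((k : ℝ) + 1) ^ (-p)) := by
  simpa using (summable_nat_add_iff 1).2 (summable_nat_rpow.2 (by linarith : -p < -1))

section Comparison

variable {p c : ℝ} {x : ℕ → ℝ}

lemma rpow_neg_le_mul_nat_add_one_rpow_neg (hp : 0 ≤ p) (hc : 0 < c)
    (hx : ∀ k : ℕ, c * (k + 1) ≤ x k) (k : ℕ) :
    x k ^ (-p) ≤ c ^ (-p) * ((k : ℝ) + 1) ^ (-p) := by
  rw [← mul_rpow hc.le (by positivity)]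
  exact rpow_le_rpow_of_nonpos (by positivity) (hx k) (by linarith)

lemma summable_rpow_neg_of_mul_nat_add_one_le (hp : 1 < p) (hc : 0 < c)
    (hx : ∀ k : ℕ, c * (k + 1) ≤ x k) : Summable (fun k => x k ^ (-p)) :=
  ((summable_nat_add_one_rpow_neg hp).mul_left _).of_nonneg_of_le
    (fun k => rpow_nonneg ((by positivity : 0 ≤ c * (k + 1)).trans (hx k)) _)
    (rpow_neg_le_mul_nat_add_one_rpow_neg (by linarith) hc hx)

lemma tsum_rpow_neg_le_of_mul_nat_add_one_le (hp : 1 < p) (hc : 0 < c)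
    (hx : ∀ k : ℕ, c * (k + 1) ≤ x k) :
    ∑' k, x k ^ (-p) ≤ c ^ (-p) * ∑' k : ℕ, ((k : ℝ) + 1) ^ (-p) := by
  rw [← tsum_mul_left]
  exact (summable_rpow_neg_of_mul_nat_add_one_le hp hc hx).tsum_le_tsum
    (rpow_neg_le_mul_nat_add_one_rpow_neg (by linarith) hc hx)
    ((summable_nat_add_one_rpow_neg hp).mul_left _)

end Comparison

lemma one_sub_div_sq_le {a s d : ℝ} (ha : 0 < a) (has : a ≤ s) (hd : a ^ 2 ≤ d) :
    1 - d / s ^ 2 ≤ 2 * (s - a) / a := by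
  have hs : 0 < s := ha.trans_le has
  calc 1 - d / s ^ 2 ≤ 1 - a ^ 2 / s ^ 2 := by gcongr
    _ = (s - a) * (s + a) / s ^ 2 := by field_simp; ring
    _ ≤ (s - a) * (2 * s) / s ^ 2 := by gcongr; linarith
    _ = 2 * (s - a) / s := by field_simp
    _ ≤ 2 * (s - a) / a := by gcongr

lemma cbar_nonneg (m : ℝ) : 0 ≤ cbar m :=
  tsum_nonneg fun _ => rpow_nonneg (by positivity) _

lemma four_mul_cbar_mul_rpow_le_cprime (m : ℝ) : 4 * cbar m * π ^ (-(2 * m)) ≤ cprime m := by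
  refine le_trans ?_ (le_max_right _ _)
  gcongr
  set x := (2 : ℝ) ^ (1 - 2 * m) * cbar m
  have hx : 0 ≤ x := mul_nonneg (by positivity) (cbar_nonneg m)
  have h2 : (2 : ℝ) ^ (2 * m) * 2 ^ (1 - 2 * m) = 2 := by
    rw [← rpow_add two_pos]
    norm_num
  have h4 : (2 : ℝ) ^ (2 * m) * (2 * x) = 4 * cbar m := by
    simp only [x]
    linear_combination (2 * cbar m) * h2
  have hsq : 2 * x ≤ (1 + x) ^ 2 := by nlinarith [sq_nonneg x]
  nlinarith [mul_le_mul_of_nonneg_left hsq (by positivity : (0 : ℝ) ≤ 2 ^ (2 * m))]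

lemma two_le_cprime (m : ℝ) : 2 ≤ cprime m :=
  le_max_left _ _

section Spline

variable {m p : ℝ} {n r : ℕ}

lemma two_pi_mul_nat_add_one_le (hn : 1 ≤ n) (hr : 1 ≤ r) (k : ℕ) :
    2 * π * ((k : ℝ) + 1) ≤ 2 * π * ((k : ℝ) * n + r) := by
  have hk : (k : ℝ) ≤ k * n := le_mul_of_one_le_right k.cast_nonneg (by exact_mod_cast hn)
  have hr' : (1 : ℝ) ≤ r := by exact_mod_cast hr
  gcongr

lemma pi_mul_mul_nat_add_one_le_sub (hr : 2 * r ≤ n) (k : ℕ) :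
    π * n * ((k : ℝ) + 1) ≤ 2 * π * (((k : ℝ) + 1) * n - r) := by
  have hrn : 2 * (r : ℝ) ≤ n := by exact_mod_cast hr
  have hkn : 0 ≤ (k : ℝ) * n := by positivity
  nlinarith [pi_pos]

lemma pi_mul_mul_nat_add_one_le_add (k : ℕ) :
    π * n * ((k : ℝ) + 1) ≤ 2 * π * (((k + 1 : ℕ) : ℝ) * n + r) := by
  push_cast
  have hpos : 0 ≤ π * n * ((k : ℝ) + 1) + 2 * π * r := by positivity
  linarith

lemma tsum_rpow_sub_nonneg (hr : 2 * r ≤ n) (p : ℝ) :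
    0 ≤ ∑' k : ℕ, (2 * π * (((k : ℝ) + 1) * n - r)) ^ p :=
  tsum_nonneg fun k => rpow_nonneg
    ((by positivity : 0 ≤ π * n * ((k : ℝ) + 1)).trans (pi_mul_mul_nat_add_one_le_sub hr k)) _

lemma rpow_neg_le_tsum_rpow_add (hp : 1 < p) (hn : 1 ≤ n) (hr : 1 ≤ r) :
    (2 * π * r) ^ (-p) ≤ ∑' k : ℕ, (2 * π * ((k : ℝ) * n + r)) ^ (-p) := by
  have hsum := summable_rpow_neg_of_mul_nat_add_one_le hp two_pi_pos
    (two_pi_mul_nat_add_one_le hn hr)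
  simpa using hsum.le_tsum 0 fun k _ => rpow_nonneg
    ((by positivity : 0 ≤ 2 * π * ((k : ℝ) + 1)).trans (two_pi_mul_nat_add_one_le hn hr k)) _

lemma rpow_neg_le_lamC (hm : 1 / 2 < m) (hr1 : 1 ≤ r) (hr : 2 * r ≤ n) :
    (2 * π * r) ^ (-(2 * m)) ≤ lamC m n r := by
  have hsecond := rpow_neg_le_tsum_rpow_add (by linarith : 1 < 2 * m) (by omega : 1 ≤ n) hr1
  have hfirst := tsum_rpow_sub_nonneg hr (-(2 * m))
  rw [lamC]
  linarith

lemma sq_rpow_neg_le_lamD (hm : 1 / 2 < m) (hr1 : 1 ≤ r) (hr : 2 * r ≤ n) :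
    ((2 * π * r) ^ (-(2 * m))) ^ 2 ≤ lamD m n r := by
  have hsecond := rpow_neg_le_tsum_rpow_add (by linarith : 1 < 4 * m) (by omega : 1 ≤ n) hr1
  have hfirst := tsum_rpow_sub_nonneg hr (-(4 * m))
  have hsq : ((2 * π * r) ^ (-(2 * m))) ^ 2 = (2 * π * r) ^ (-(4 * m)) := by
    rw [← rpow_natCast, ← rpow_mul (by positivity)]
    ring_nf
  rw [hsq, lamD]
  linarith

lemma lamC_le (hm : 1 / 2 < m) (hr1 : 1 ≤ r) (hr : 2 * r ≤ n) :
    lamC m n r ≤ (2 * π * r) ^ (-(2 * m)) + 2 * cbar m * (π * n) ^ (-(2 * m)) := by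
  have hp : 1 < 2 * m := by linarith
  have hc : 0 < π * n := mul_pos pi_pos (by exact_mod_cast (by omega : 0 < n))
  have hfirst := tsum_rpow_neg_le_of_mul_nat_add_one_le hp hc (pi_mul_mul_nat_add_one_le_sub hr)
  have htail := tsum_rpow_neg_le_of_mul_nat_add_one_le hp hc
    (pi_mul_mul_nat_add_one_le_add (n := n) (r := r))
  have hsplit := (summable_rpow_neg_of_mul_nat_add_one_le hp two_pi_pos
    (two_pi_mul_nat_add_one_le (by omega : 1 ≤ n) hr1)).tsum_eq_zero_add
  rw [lamC, hsplit]
  simp only [Nat.cast_zero, zero_mul, zero_add] at hsplit ⊢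
  rw [cbar]
  linarith

end Spline

theorem low_frequency_spectrum_bound_general (m : ℝ) (hm : 1 / 2 < m) (lam : ℝ) (hlam : 0 < lam)
    (n r : ℕ) (hr1 : 1 ≤ r) (hr : 2 * r ≤ n) :
    1 - lamD m n r / (lam + lamC m n r) ^ 2 ≤
      cprime m * (lam + (n : ℝ) ^ (-(2 * m))) * (2 * π * r) ^ (2 * m) := by
  have hC_ge := rpow_neg_le_lamC hm hr1 hr
  have hC_le := lamC_le hm hr1 hr
  have hD := sq_rpow_neg_le_lamD hm hr1 hr
  have ha_inv : (2 * π * r) ^ (2 * m) = ((2 * π * r) ^ (-(2 * m)))⁻¹ := by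
    rw [rpow_neg (by positivity), inv_inv]
  set a := (2 * π * r) ^ (-(2 * m))
  have ha : 0 < a := by positivity
  have hgap : 2 * (lam + lamC m n r - a) ≤ cprime m * (lam + (n : ℝ) ^ (-(2 * m))) := by
    rw [mul_rpow pi_pos.le n.cast_nonneg] at hC_le
    have hlam' := mul_le_mul_of_nonneg_right (two_le_cprime m) hlam.le
    have hn' := mul_le_mul_of_nonneg_right (four_mul_cbar_mul_rpow_le_cprime m)
      (by positivity : (0 : ℝ) ≤ (n : ℝ) ^ (-(2 * m)))
    linarith
  calc 1 - lamD m n r / (lam + lamC m n r) ^ 2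
      ≤ 2 * (lam + lamC m n r - a) / a := one_sub_div_sq_le ha (by linarith) hD
    _ = 2 * (lam + lamC m n r - a) * (2 * π * r) ^ (2 * m) := by rw [ha_inv, div_eq_mul_inv]
    _ ≤ cprime m * (lam + (n : ℝ) ^ (-(2 * m))) * (2 * π * r) ^ (2 * m) := by gcongr

/-- Inequality (point:0) in Lemma S.4:
`1 - λ_{d,r}/(λ + λ_{c,r})² ≤ c'_m (λ + n^{-2m}) (2πr)^{2m}`. -/
theorem low_frequency_spectrum_bound (m : ℝ) (hm : 1 / 2 < m) (lam : ℝ) (hlam : 0 < lam)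
    (n r : ℕ) (hn : 2 ≤ n) (hr1 : 1 ≤ r) (hr : 2 * r ≤ n) :
    1 - lamD m n r / (lam + lamC m n r) ^ 2 ≤
      cprime m * (lam + (n : ℝ) ^ (-(2 * m))) * (2 * π * r) ^ (2 * m) :=
  low_frequency_spectrum_bound_general m hm lam hlam n r hr1 hr

end
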